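/- Under the PWGCO model with moment matrix M(ξ_0) = diag(1, I_1+V_1/3, ..., I_{n_G}+V_{n_G}/3), for any permutation π in the feasible set, the leverage x(π)^T M(ξ_0)^{-1} x(π) equals exactly 1 + ∑_{g=1}^{n_G} |G_g|(|G_g|−1)/2, which equals the number of model parameters; hence the uniform measure is G-optimal with G-value equal to the parameter count. -/

import Mathlib

/-!
Write `M(ξ₀) = diag(1, B)` with `B = (I + T Tᵀ) / 3`, where `T` is the pair–item incidence
matrix, `T_{(i,j),l} = [l = i] - [l = j]`. If `u + TᵀT u = Tᵀ x`, then `B (3 (x - T u)) = x`, so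
the leverage is `1 + 3 (x ⬝ x - Tᵀx ⬝ u)`.

Here `(Tᵀ x)_l` is the signed rank of `l` in its group (items after `l` minus items before it),
`TᵀT` acts on a group of size `K` as `K I - J`, and signed ranks sum to zero over a group, so
`u = Tᵀx / (K + 1)` works. The signed ranks in a group are `K - 1, K - 3, …, 1 - K`, whose squares
sum to `(K - 1) K (K + 1) / 3`; each group thus contributes `3 (K(K-1)/2 - K(K-1)/3) = K(K-1)/2`.
-/

abbrev GPair {m n : ℕ} (G : Fin n → Finset (Fin m)) :=
  {p : Fin m × Fin m // p.1 < p.2 ∧ ∃ g, p.1 ∈ G g ∧ p.2 ∈ G g}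

noncomputable def Mmom {m n : ℕ} (G : Fin n → Finset (Fin m)) :
    Matrix (Unit ⊕ GPair G) (Unit ⊕ GPair G) ℝ := fun a b =>
  match a, b with
  | Sum.inl _, Sum.inl _ => 1
  | Sum.inl _, Sum.inr _ => 0
  | Sum.inr _, Sum.inl _ => 0
  | Sum.inr p, Sum.inr q =>
      if p = q then 1
      else if p.1.1 = q.1.1 ∨ p.1.2 = q.1.2 then 1 / 3
      else if p.1.2 = q.1.1 ∨ p.1.1 = q.1.2 then -(1 / 3)
      else 0

noncomputable def xvec {m n : ℕ} (G : Fin n → Finset (Fin m))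
    (π : Equiv.Perm (Fin m)) : (Unit ⊕ GPair G) → ℝ
  | Sum.inl _ => 1
  | Sum.inr p => if π.symm p.1.1 < π.symm p.1.2 then 1 else -1

open Finset Matrix

section SignedRank

variable {ι α : Type*} [LinearOrder α] (key : ι → α)

def orient (i j : ι) : ℝ := if key i < key j then 1 else -1

variable {key}

lemma orient_swap (hkey : Function.Injective key) {i j : ι} (hij : i ≠ j) :
    orient key j i = -orient key i j := by
  rcases (hkey.ne hij).lt_or_gt with h | h <;> simp [orient, h, h.not_gt]

lemma forall_lt_of_forall_le_of_notMem (hkey : Function.Injective key) {s : Finset ι} {a : ι}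
    (has : a ∉ s) (hmax : ∀ x ∈ s, key x ≤ key a) : ∀ x ∈ s, key x < key a := fun x hx =>
  (hmax x hx).lt_of_ne (hkey.ne (by rintro rfl; exact has hx))

variable (key) [DecidableEq ι]

def signedRank (s : Finset ι) (l : ι) : ℝ := ∑ c ∈ s.erase l, orient key l c

variable {key}

lemma signedRank_insert_of_mem {s : Finset ι} {a l : ι} (hl : l ∈ s)
    (ha : ∀ x ∈ s, key x < key a) :
    signedRank key (insert a s) l = signedRank key s l + 1 := by
  have has : a ∉ s := fun h => lt_irrefl _ (ha a h)
  have hal : a ≠ l := by rintro rfl; exact has hl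
  rw [signedRank, erase_insert_of_ne hal, sum_insert fun h => has (mem_of_mem_erase h), signedRank,
    orient, if_pos (ha l hl), add_comm]

lemma signedRank_insert_self {s : Finset ι} {a : ι} (has : a ∉ s)
    (ha : ∀ x ∈ s, key x < key a) : signedRank key (insert a s) a = -#s := by
  rw [signedRank, erase_insert has,
    sum_congr rfl fun x hx => show orient key a x = -1 from if_neg (ha x hx).not_gt]
  simp

lemma sum_signedRank (hkey : Function.Injective key) (s : Finset ι) :
    ∑ l ∈ s, signedRank key s l = 0 := by
  induction s using Finset.induction_on_max_value key with
  | empty => simp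
  | insert a s has hmax ih =>
    have ha := forall_lt_of_forall_le_of_notMem hkey has hmax
    rw [sum_insert has, signedRank_insert_self has ha,
      sum_congr rfl fun l hl => signedRank_insert_of_mem hl ha, sum_add_distrib, ih]
    simp

lemma sum_signedRank_sq (hkey : Function.Injective key) (s : Finset ι) :
    ∑ l ∈ s, signedRank key s l ^ 2 = (#s - 1) * #s * (#s + 1) / 3 := by
  induction s using Finset.induction_on_max_value key with
  | empty => simp
  | insert a s has hmax ih =>
    have ha := forall_lt_of_forall_le_of_notMem hkey has hmax
    rw [sum_insert has, signedRank_insert_self has ha, card_insert_of_notMem has,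
      sum_congr rfl fun l hl => congrArg (· ^ 2) (signedRank_insert_of_mem hl ha)]
    simp only [add_sq, mul_one, one_pow, sum_add_distrib, ← mul_sum, sum_signedRank hkey, ih,
      sum_const, nsmul_eq_mul]
    push_cast
    ring

end SignedRank

lemma one_add_mul_transpose_mulVec_sub {ι κ R : Type*} [Fintype ι] [Fintype κ] [DecidableEq ι]
    [CommRing R] (T : Matrix ι κ R) {x : ι → R} {u : κ → R}
    (hu : u + Tᵀ *ᵥ (T *ᵥ u) = Tᵀ *ᵥ x) : (1 + T * Tᵀ) *ᵥ (x - T *ᵥ u) = x := by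
  have hTu : Tᵀ *ᵥ (x - T *ᵥ u) = u := by rw [mulVec_sub, ← hu]; abel
  rw [add_mulVec, one_mulVec, ← mulVec_mulVec, hTu, sub_add_cancel]

lemma posDef_one_add_mul_transpose {ι κ : Type*} [Fintype ι] [Fintype κ] [DecidableEq ι]
    (T : Matrix ι κ ℝ) : (1 + T * Tᵀ).PosDef := by
  simpa [conjTranspose_eq_transpose_of_trivial] using
    PosDef.one.add_posSemidef (posSemidef_self_mul_conjTranspose T)

section Incidence

variable {m n : ℕ} (G : Fin n → Finset (Fin m))

def incidence : Matrix (GPair G) (Fin m) ℝ := fun p l =>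
  (if l = p.1.1 then 1 else 0) - (if l = p.1.2 then 1 else 0)

def groupOf (l : Fin m) : Finset (Fin m) := {c | ∃ g, l ∈ G g ∧ c ∈ G g}

lemma incidence_mul_transpose_apply (p q : GPair G) :
    (incidence G * (incidence G)ᵀ) p q =
      (if p.1.1 = q.1.1 then 1 else 0) + (if p.1.2 = q.1.2 then 1 else 0)
        - (if p.1.1 = q.1.2 then 1 else 0) - (if p.1.2 = q.1.1 then 1 else 0) := by
  simp only [mul_apply, transpose_apply, incidence, sub_mul, mul_sub, ite_mul, one_mul, zero_mul,
    sum_sub_distrib, sum_ite_eq', mem_univ, if_true]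
  ring

lemma Mmom_eq_fromBlocks :
    Mmom G = fromBlocks 1 0 0 ((3 : ℝ)⁻¹ • (1 + incidence G * (incidence G)ᵀ)) := by
  ext (u | p) (v | q)
  · rfl
  · rfl
  · rfl
  · rw [fromBlocks_apply₂₂, Matrix.smul_apply, Matrix.add_apply, incidence_mul_transpose_apply,
      one_apply]
    obtain ⟨⟨i, j⟩, hij, -⟩ := p
    obtain ⟨⟨a, b⟩, hab, -⟩ := q
    simp only [Mmom, Subtype.mk.injEq, Prod.mk.injEq, smul_eq_mul, Fin.ext_iff]
    rw [Fin.lt_def] at hij hab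
    dsimp only at hij hab
    split_ifs <;> first | omega | norm_num

lemma isUnit_Mmom : IsUnit (Mmom G) := by
  rw [Mmom_eq_fromBlocks, isUnit_fromBlocks_zero₂₁]
  exact ⟨isUnit_one,
    ((posDef_one_add_mul_transpose _).smul (by norm_num : (0 : ℝ) < 3⁻¹)).isUnit⟩

lemma incidence_mulVec_apply (u : Fin m → ℝ) (p : GPair G) :
    (incidence G *ᵥ u) p = u p.1.1 - u p.1.2 := by
  simp [mulVec, dotProduct, incidence, sub_mul]

lemma mem_groupOf {l c : Fin m} : c ∈ groupOf G l ↔ ∃ g, l ∈ G g ∧ c ∈ G g := by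
  simp [groupOf]

lemma incidence_transpose_mulVec_apply {F : Fin m → Fin m → ℝ}
    (hF : ∀ a b, a < b → F b a = -F a b) (l : Fin m) :
    ((incidence G)ᵀ *ᵥ fun p => F p.1.1 p.1.2) l = ∑ c ∈ (groupOf G l).erase l, F l c := by
  have hS : ∀ q : Fin m × Fin m, q ∈ ({q | q.1 < q.2 ∧ ∃ g, q.1 ∈ G g ∧ q.2 ∈ G g} : Finset _) ↔
      q.1 < q.2 ∧ ∃ g, q.1 ∈ G g ∧ q.2 ∈ G g := by simp
  simp only [mulVec, dotProduct, transpose_apply, incidence]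
  rw [← sum_subtype _ hS
      (fun q => ((if l = q.1 then 1 else 0) - (if l = q.2 then 1 else 0)) * F q.1 q.2),
    sum_filter, Fintype.sum_prod_type]
  have hsplit : ∀ x y : Fin m, (if x < y ∧ ∃ g, x ∈ G g ∧ y ∈ G g then
      ((if l = x then 1 else 0) - (if l = y then 1 else 0)) * F x y else 0) =
      (if x = l then (if l < y ∧ y ∈ groupOf G l then F l y else 0) else 0) -
        (if y = l then (if x < l ∧ x ∈ groupOf G l then F x l else 0) else 0) := by
    intro x y
    simp only [mem_groupOf]
    split_ifs <;> grind
  simp only [hsplit, sum_sub_distrib]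
  rw [sum_comm (f := fun x y => if y = l then _ else _)]
  simp only [sum_ite_irrel, sum_const_zero, sum_ite_eq', mem_univ, if_true, ← sum_sub_distrib]
  rw [← Fintype.sum_extend_by_zero ((groupOf G l).erase l)]
  refine sum_congr rfl fun c _ => ?_
  rcases lt_trichotomy l c with h | rfl | h
  · simp [h, h.not_gt, h.ne']
  · simp
  · by_cases hc : c ∈ groupOf G l <;> simp [h, h.not_gt, h.ne, hc, hF c l h]

variable {G}

lemma groupOf_eq_of_mem (hdisj : ∀ g h : Fin n, g ≠ h → Disjoint (G g) (G h)) {l : Fin m}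
    {g : Fin n} (hl : l ∈ G g) : groupOf G l = G g := by
  ext c
  rw [mem_groupOf]
  refine ⟨fun ⟨h, hlh, hch⟩ => ?_, fun hc => ⟨g, hl, hc⟩⟩
  obtain rfl : h = g := by
    by_contra hne
    exact disjoint_left.mp (hdisj h g hne) hlh hl
  exact hch

lemma groupOf_eq_empty {l : Fin m} (hl : ∀ g, l ∉ G g) : groupOf G l = ∅ := by
  ext c
  simp [mem_groupOf, hl]

lemma groupOf_eq_of_mem_groupOf (hdisj : ∀ g h : Fin n, g ≠ h → Disjoint (G g) (G h))
    {l c : Fin m} (hc : c ∈ groupOf G l) : groupOf G c = groupOf G l := by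
  obtain ⟨g, hl, hc⟩ := (mem_groupOf G).1 hc
  rw [groupOf_eq_of_mem hdisj hl, groupOf_eq_of_mem hdisj hc]

lemma sum_groupOf_eq_sum_sum (hdisj : ∀ g h : Fin n, g ≠ h → Disjoint (G g) (G h))
    (f : Finset (Fin m) → Fin m → ℝ) (hf : ∀ l, f ∅ l = 0) :
    ∑ l, f (groupOf G l) l = ∑ g, ∑ l ∈ G g, f (G g) l := by
  calc ∑ l, f (groupOf G l) l = ∑ l ∈ univ.biUnion G, f (groupOf G l) l := by
        refine (sum_subset (subset_univ _) fun l _ hl => ?_).symm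
        rw [groupOf_eq_empty (by simpa using hl), hf]
    _ = ∑ g, ∑ l ∈ G g, f (G g) l := by
        rw [sum_biUnion fun g _ h _ hgh => hdisj g h hgh]
        exact sum_congr rfl fun g _ => sum_congr rfl fun l hl => by
          rw [groupOf_eq_of_mem hdisj hl]

lemma card_GPair (hdisj : ∀ g h : Fin n, g ≠ h → Disjoint (G g) (G h)) :
    Fintype.card (GPair G) = ∑ g, (#(G g)).choose 2 := by
  have hpairs : ({p | p.1 < p.2 ∧ ∃ g, p.1 ∈ G g ∧ p.2 ∈ G g} : Finset (Fin m × Fin m)) =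
      univ.biUnion fun g => {p ∈ G g ×ˢ G g | p.1 < p.2} := by
    ext p
    simp only [mem_filter, mem_univ, true_and, mem_biUnion, mem_product]
    tauto
  rw [Fintype.card_subtype, hpairs, card_biUnion fun g _ h _ hgh =>
    disjoint_filter_filter (disjoint_product.2 (Or.inl (hdisj g h hgh)))]
  exact sum_congr rfl fun g _ => card_product_filter_lt

variable (G) (π : Equiv.Perm (Fin m))

noncomputable def pairOrient (p : GPair G) : ℝ := orient π.symm p.1.1 p.1.2

noncomputable def potential (l : Fin m) : ℝ :=
  signedRank π.symm (groupOf G l) l / (#(groupOf G l) + 1)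

noncomputable def pairSolution : GPair G → ℝ :=
  (3 : ℝ) • (pairOrient G π - incidence G *ᵥ potential G π)

lemma xvec_eq_sumElim : xvec G π = Sum.elim (fun _ => 1) (pairOrient G π) := by
  ext (_ | _) <;> rfl

lemma pairOrient_dotProduct_self :
    pairOrient G π ⬝ᵥ pairOrient G π = Fintype.card (GPair G) := by
  rw [Fintype.card_eq_sum_ones, Nat.cast_sum, dotProduct]
  refine sum_congr rfl fun p _ => ?_
  simp only [pairOrient, orient]
  split_ifs <;> norm_num

lemma incidence_transpose_mulVec_pairOrient (l : Fin m) :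
    ((incidence G)ᵀ *ᵥ pairOrient G π) l = signedRank π.symm (groupOf G l) l :=
  incidence_transpose_mulVec_apply G (fun _ _ h => orient_swap π.symm.injective h.ne) l

variable {G}

lemma sum_potential_groupOf (hdisj : ∀ g h : Fin n, g ≠ h → Disjoint (G g) (G h)) (l : Fin m) :
    ∑ c ∈ groupOf G l, potential G π c = 0 := by
  rw [sum_congr rfl fun c hc => by rw [potential, groupOf_eq_of_mem_groupOf hdisj hc], ← sum_div,
    sum_signedRank π.symm.injective, zero_div]

lemma potential_add_incidence_transpose_mulVec
    (hdisj : ∀ g h : Fin n, g ≠ h → Disjoint (G g) (G h)) :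
    potential G π + (incidence G)ᵀ *ᵥ (incidence G *ᵥ potential G π) =
      (incidence G)ᵀ *ᵥ pairOrient G π := by
  ext l
  have hTu : incidence G *ᵥ potential G π = fun p => potential G π p.1.1 - potential G π p.1.2 :=
    funext (incidence_mulVec_apply G _)
  rw [Pi.add_apply, hTu,
    incidence_transpose_mulVec_apply G (F := fun a b => potential G π a - potential G π b)
      (fun _ _ _ => by ring),
    incidence_transpose_mulVec_pairOrient, sum_erase _ (sub_self _), sum_sub_distrib, sum_const,
    sum_potential_groupOf π hdisj, nsmul_eq_mul, potential]
  field_simp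
  ring

lemma incidence_transpose_mulVec_pairOrient_dotProduct_potential
    (hdisj : ∀ g h : Fin n, g ≠ h → Disjoint (G g) (G h)) :
    (incidence G)ᵀ *ᵥ pairOrient G π ⬝ᵥ potential G π =
      ∑ g, (#(G g) : ℝ) * (#(G g) - 1) / 3 := by
  simp only [dotProduct, incidence_transpose_mulVec_pairOrient, potential]
  rw [sum_groupOf_eq_sum_sum hdisj
      (fun s l => signedRank π.symm s l * (signedRank π.symm s l / (#s + 1)))
      (by simp [signedRank])]
  refine sum_congr rfl fun g _ => ?_
  simp_rw [← mul_div_assoc, ← sq, ← sum_div, sum_signedRank_sq π.symm.injective]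
  field_simp

lemma Mmom_mulVec_pairSolution (hdisj : ∀ g h : Fin n, g ≠ h → Disjoint (G g) (G h)) :
    Mmom G *ᵥ Sum.elim (fun _ => 1) (pairSolution G π) = xvec G π := by
  rw [Mmom_eq_fromBlocks, fromBlocks_mulVec, xvec_eq_sumElim]
  simp only [Sum.elim_comp_inl, Sum.elim_comp_inr, one_mulVec, zero_mulVec, add_zero, zero_add]
  rw [pairSolution, smul_mulVec, mulVec_smul, smul_smul,
    one_add_mul_transpose_mulVec_sub _ (potential_add_incidence_transpose_mulVec π hdisj)]
  norm_num

lemma pairOrient_dotProduct_pairSolution (hdisj : ∀ g h : Fin n, g ≠ h → Disjoint (G g) (G h)) :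
    pairOrient G π ⬝ᵥ pairSolution G π = ∑ g, (#(G g) : ℝ) * (#(G g) - 1) / 2 := by
  rw [pairSolution, dotProduct_smul, dotProduct_sub, dotProduct_mulVec, ← mulVec_transpose,
    pairOrient_dotProduct_self, card_GPair hdisj,
    incidence_transpose_mulVec_pairOrient_dotProduct_potential π hdisj, smul_eq_mul,
    Nat.cast_sum, ← sum_sub_distrib, mul_sum]
  exact sum_congr rfl fun g _ => by rw [Nat.cast_choose_two]; ring

end Incidence

theorem stmt13_general (m n : ℕ) (G : Fin n → Finset (Fin m))
    (hdisj : ∀ g h : Fin n, g ≠ h → Disjoint (G g) (G h))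
    (π : Equiv.Perm (Fin m)) :
    dotProduct (xvec G π) ((Mmom G)⁻¹.mulVec (xvec G π))
        = 1 + ∑ g, ((G g).card : ℝ) * (((G g).card : ℝ) - 1) / 2 ∧
    (Fintype.card (Unit ⊕ GPair G)
        = 1 + ∑ g, (G g).card * ((G g).card - 1) / 2) := by
  refine ⟨?_, by simp [card_GPair hdisj, Nat.choose_two_right]⟩
  have := (isUnit_Mmom G).invertible
  rw [inv_mulVec_eq_vec (Mmom_mulVec_pairSolution π hdisj).symm, xvec_eq_sumElim,
    sumElim_dotProduct_sumElim, pairOrient_dotProduct_pairSolution π hdisj]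
  simp [dotProduct]

/-- for any feasible permutation `π`, the leverage
`x(π)ᵀ M(ξ₀)⁻¹ x(π)` equals `1 + ∑_g |G_g|(|G_g|-1)/2`, which is the number of
model parameters. -/
theorem stmt13 (m n : ℕ) (G : Fin n → Finset (Fin m))
    (hdisj : ∀ g h : Fin n, g ≠ h → Disjoint (G g) (G h))
    (hcover : ∀ x : Fin m, ∃ g, x ∈ G g)
    (hne : ∀ g, (G g).Nonempty)
    (π : Equiv.Perm (Fin m))
    (hfeas : ∀ g h : Fin n, g < h → ∀ i ∈ G g, ∀ j ∈ G h, π.symm i < π.symm j) :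
    dotProduct (xvec G π) ((Mmom G)⁻¹.mulVec (xvec G π))
        = 1 + ∑ g, ((G g).card : ℝ) * (((G g).card : ℝ) - 1) / 2 ∧
    (Fintype.card (Unit ⊕ GPair G)
        = 1 + ∑ g, (G g).card * ((G g).card - 1) / 2) :=
  stmt13_general m n G hdisj π
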